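/- arXiv:2008.13376 — 4 statements merged into one kernel-verified Lean document; each statement's English description precedes it below -/
import Mathlib

section
/- Let R be an integral domain that is local (with maximal ideal m_R and residue field k = R/m_R) and integrally closed in its field of fractions K. Let f ∈ R[z] be a polynomial in one variable such that the image of f in k[z] is nonzero and such that f splits into a product of polynomials of degree 1 in K[z]. Then there exist integers m, n ≥ 0, elements a_1, …, a_m ∈ R, elements b_1, …, b_n ∈ m_R, and a unit c ∈ R^× such that f = c · ∏_{i=1}^m (z − a_i) · ∏_{j=1}^n (1 − b_j·z) in R[z]. -/
/-!
Write `f = c ∏ (X - α)` over the fraction field `K`. Dividing by one linear factor at a time,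
`X - α` when `α ∈ V` and `1 - α⁻¹ X` otherwise, shows that `c ∏_{α ∈ t} α` lies in every valuation
ring `V ⊇ R` of `K` for every sub-multiset `t` of the roots (Kronecker); as `R` is integrally
closed, these products lie in `R`. If `c` is a unit, each root lies in `R`. Otherwise some
coefficient `f_j` with `j < deg f` is a unit, and by Vieta `± f_j` is the sum of the `c ∏ t` with
`#t = deg f - j`; as `R` is local one of them is a unit, and removing a root `α` from that `t`
shows `α⁻¹ ∈ R`. So either `α ∈ R` or `α⁻¹ ∈ m_R`, which splits off a factor `X - a` or `1 - b X`
of `f` in `R[X]`, and we induct on the degree.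
-/

open Polynomial

namespace Polynomial

variable {A : Type*} [CommRing A]

theorem coeff_mem_of_coeff_X_sub_C_mul_mem (S : Subring A) {a : A} (ha : a ∈ S) {g : A[X]}
    (h : ∀ i, ((X - C a) * g).coeff i ∈ S) (i : ℕ) : g.coeff i ∈ S := by
  obtain ⟨P, hP⟩ : (X - C a) * g ∈ lifts S.subtype :=
    (lifts_iff_coeff_lifts _).mpr fun n => by simpa using h n
  rw [coe_mapRingHom] at hP
  have hmonic : (X - C (⟨a, ha⟩ : S)).Monic := monic_X_sub_C _
  have hg : g = (P /ₘ (X - C ⟨a, ha⟩)).map S.subtype := by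
    rw [map_divByMonic _ hmonic, hP, Polynomial.map_sub, map_X, map_C, Subring.subtype_apply,
      mul_divByMonic_cancel_left _ (monic_X_sub_C a)]
  rw [hg, coeff_map]
  exact Subtype.prop _

theorem coeff_mem_of_coeff_one_sub_C_mul_X_mul_mem (S : Subring A) {b : A} (hb : b ∈ S) {g : A[X]}
    (h : ∀ i, ((1 - C b * X) * g).coeff i ∈ S) (i : ℕ) : g.coeff i ∈ S := by
  induction i with
  | zero => simpa [sub_mul, mul_assoc] using h 0
  | succ k ih =>
    have hk : ((1 - C b * X) * g).coeff (k + 1) = g.coeff (k + 1) - b * g.coeff k := by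
      simp [sub_mul, mul_assoc, coeff_C_mul, coeff_X_mul]
    simpa [hk] using S.add_mem (h (k + 1)) (S.mul_mem hb ih)

theorem natDegree_one_sub_C_mul_X {b : A} (hb : b ≠ 0) : (1 - C b * X).natDegree = 1 := by
  rw [natDegree_sub_eq_right_of_natDegree_lt] <;> rw [natDegree_C_mul_X b hb]
  simp

end Polynomial

namespace ValuationSubring

variable {K : Type*} [Field K] (V : ValuationSubring K)

theorem mul_prod_mem_of_coeff_mem {c : K} {s t : Multiset K}
    (h : ∀ i, (C c * (s.map fun α => X - C α).prod).coeff i ∈ V) (hts : t ≤ s) :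
    c * t.prod ∈ V := by
  induction s using Multiset.induction generalizing c t with
  | empty =>
    rw [nonpos_iff_eq_zero.mp hts]
    simpa using h 0
  | cons α s ih =>
    have hcons : C c * ((α ::ₘ s).map fun α => X - C α).prod =
        (X - C α) * (C c * (s.map fun α => X - C α).prod) := by
      rw [Multiset.map_cons, Multiset.prod_cons]; ring
    by_cases hα : α ∈ V
    · have hs := coeff_mem_of_coeff_X_sub_C_mul_mem V.toSubring hα (hcons ▸ h)
      by_cases hαt : α ∈ t
      · obtain ⟨u, rfl⟩ := Multiset.exists_cons_of_mem hαt
        rw [Multiset.prod_cons, mul_left_comm]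
        exact V.mul_mem _ _ hα (ih hs ((Multiset.cons_le_cons_iff α).mp hts))
      · exact ih hs ((Multiset.le_cons_of_notMem hαt).mp hts)
    · have hα' : α⁻¹ ∈ V := (V.mem_or_inv_mem α).resolve_left hα
      have hα0 : α ≠ 0 := fun h0 => hα (h0 ▸ V.zero_mem)
      have hlin : C α⁻¹ * C α = (1 : K[X]) := by rw [← C_mul, inv_mul_cancel₀ hα0, C_1]
      have hpoly : (1 - C α⁻¹ * X) * (C (c * α) * (s.map fun α => X - C α).prod) =
          -((X - C α) * (C c * (s.map fun α => X - C α).prod)) := by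
        rw [C_mul]
        linear_combination (-X * C c * (s.map fun α => X - C α).prod) * hlin
      have hs := coeff_mem_of_coeff_one_sub_C_mul_X_mul_mem V.toSubring hα' fun i => by
        rw [hpoly, coeff_neg, ← hcons]
        exact V.neg_mem _ (h i)
      by_cases hαt : α ∈ t
      · obtain ⟨u, rfl⟩ := Multiset.exists_cons_of_mem hαt
        rw [Multiset.prod_cons, mul_left_comm, ← mul_assoc, mul_comm α c]
        exact ih hs ((Multiset.cons_le_cons_iff α).mp hts)
      · have hmem := V.mul_mem _ _ (ih hs ((Multiset.le_cons_of_notMem hαt).mp hts)) hα'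
        rwa [mul_right_comm, mul_assoc c, mul_inv_cancel₀ hα0, mul_one] at hmem

end ValuationSubring

theorem isIntegral_of_forall_valuationSubring {R K : Type*} [CommRing R] [Field K] [Algebra R K]
    {x : K} (h : ∀ V : ValuationSubring K, (∀ r, algebraMap R K r ∈ V) → x ∈ V) :
    IsIntegral R x := by
  by_contra hx
  obtain ⟨V, hle, hxV⟩ := Subring.exists_le_valuationSubring_of_isIntegrallyClosedIn
    (R := (integralClosure R K).toSubring) (x := x) hx
  exact hxV (h V fun r => hle (isIntegral_algebraMap (x := r)))

theorem Polynomial.isIntegral_mul_prod_of_map_eq {R K : Type*} [CommRing R] [Field K]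
    [Algebra R K] {f : R[X]} {c : K} {s t : Multiset K}
    (hf : f.map (algebraMap R K) = C c * (s.map fun α => X - C α).prod) (hts : t ≤ s) :
    IsIntegral R (c * t.prod) :=
  isIntegral_of_forall_valuationSubring fun V hV =>
    V.mul_prod_mem_of_coeff_mem (fun i => by rw [← hf, coeff_map]; exact hV _) hts

theorem IsLocalRing.exists_isUnit_of_map_sum {R S : Type*} [CommRing R] [IsLocalRing R]
    [Semiring S] {φ : R →+* S} (hφ : Function.Injective φ) {l : Multiset S}
    (hl : ∀ x ∈ l, ∃ r, φ r = x) {u : R} (hu : IsUnit u) (hsum : φ u = l.sum) :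
    ∃ x ∈ l, ∃ r, IsUnit r ∧ φ r = x := by
  by_contra! hno
  obtain ⟨r, hr, hru⟩ : l.sum ∈ (nonunitsAddSubmonoid R).map φ :=
    multiset_sum_mem l fun x hx => by
      obtain ⟨r, rfl⟩ := hl x hx
      exact ⟨r, fun hr => hno _ hx r hr rfl, rfl⟩
  exact hr (hφ (hru.trans hsum.symm) ▸ hu)

namespace Polynomial

open IsLocalRing

theorem exists_isUnit_coeff_of_map_residue_ne_zero {R : Type*} [CommRing R] [IsLocalRing R]
    {f : R[X]} (hf : f.map (residue R) ≠ 0) : ∃ j, IsUnit (f.coeff j) := by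
  by_contra! h
  refine hf (ext fun j => ?_)
  rw [coeff_map, coeff_zero, ← not_ne_iff, residue_ne_zero_iff_isUnit]
  exact h j

variable {R K : Type*} [CommRing R] [Field K] [Algebra R K] [IsFractionRing R K] {f : R[X]}

local notation "φ" => algebraMap R K

theorem exists_algebraMap_eq_leadingCoeff_mul_prod [IsIntegrallyClosed R]
    (hsplit : (f.map φ).Splits) {t : Multiset K} (ht : t ≤ (f.map φ).roots) :
    ∃ r, φ r = φ f.leadingCoeff * t.prod := by
  have hf := hsplit.eq_prod_roots
  rw [leadingCoeff_map_of_injective (IsFractionRing.injective R K)] at hf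
  exact IsIntegrallyClosed.isIntegral_iff.mp (isIntegral_mul_prod_of_map_eq hf ht)

theorem exists_eq_one_sub_C_mul_X_mul {α : K} (hα : (f.map φ).IsRoot α) {b : R}
    (hb : φ b * α = 1) : ∃ g, f = (1 - C b * X) * g := by
  obtain ⟨q, hq⟩ := dvd_iff_isRoot.mpr hα
  have hbα : C (φ b) * C α = (1 : K[X]) := by rw [← C_mul, hb, C_1]
  have hfq : f.map φ = (1 - C (φ b) * X) * (C (-α) * q) := by
    rw [hq, C_neg]
    linear_combination (-X * q) * hbα
  obtain ⟨g, hg⟩ : C (-α) * q ∈ lifts φ := (lifts_iff_coeff_lifts _).mpr <|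
    coeff_mem_of_coeff_one_sub_C_mul_X_mul_mem (algebraMap R K).range ⟨b, rfl⟩ fun i => by
      rw [← hfq, coeff_map]
      exact ⟨_, rfl⟩
  refine ⟨g, map_injective φ (IsFractionRing.injective R K) ?_⟩
  rw [coe_mapRingHom] at hg
  rw [Polynomial.map_mul, hg, hfq]
  simp

variable [IsLocalRing R] [IsIntegrallyClosed R]

theorem exists_isUnit_eq_leadingCoeff_mul_prod (hf : f.map (residue R) ≠ 0)
    (hsplit : (f.map φ).Splits) (hu : ¬IsUnit f.leadingCoeff) :
    ∃ t ≤ (f.map φ).roots, t ≠ 0 ∧ ∃ r, IsUnit r ∧ φ r = φ f.leadingCoeff * t.prod := by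
  have hinj := IsFractionRing.injective R K
  obtain ⟨j, hj⟩ := exists_isUnit_coeff_of_map_residue_ne_zero hf
  set N := f.natDegree
  have hjN : j < N :=
    lt_of_le_of_ne (le_natDegree_of_ne_zero hj.ne_zero) fun h => hu (by rwa [h] at hj)
  have hvieta := coeff_eq_esymm_roots_of_splits hsplit (k := j)
    (by rw [natDegree_map_eq_of_injective hinj]; exact hjN.le)
  rw [coeff_map, natDegree_map_eq_of_injective hinj, leadingCoeff_map_of_injective hinj] at hvieta
  have hsum : φ ((-1) ^ (N - j) * f.coeff j) =
      (((f.map φ).roots.powersetCard (N - j)).map fun t => φ f.leadingCoeff * t.prod).sum := by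
    have hsq : ((-1 : K) ^ (N - j)) * (-1) ^ (N - j) = 1 := by
      rw [← mul_pow, neg_one_mul, neg_neg, one_pow]
    rw [Multiset.sum_map_mul_left, ← Multiset.esymm, map_mul, hvieta, map_pow, map_neg, map_one]
    linear_combination (φ f.leadingCoeff * (f.map φ).roots.esymm (N - j)) * hsq
  obtain ⟨x, hx, r, hr, rfl⟩ := exists_isUnit_of_map_sum hinj (fun x hx => by
      obtain ⟨t, ht, rfl⟩ := Multiset.mem_map.mp hx
      exact exists_algebraMap_eq_leadingCoeff_mul_prod hsplit (Multiset.mem_powersetCard.mp ht).1)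
    (((isUnit_neg_one).pow _).mul hj) hsum
  obtain ⟨t, ht, htr⟩ := Multiset.mem_map.mp hx
  obtain ⟨hts, htcard⟩ := Multiset.mem_powersetCard.mp ht
  exact ⟨t, hts, fun h0 => by rw [h0, Multiset.card_zero] at htcard; omega, r, hr, htr.symm⟩

theorem exists_isRoot_map_mul_eq_one (hf : f.map (residue R) ≠ 0) (hsplit : (f.map φ).Splits)
    (hu : ¬IsUnit f.leadingCoeff) : ∃ α, (f.map φ).IsRoot α ∧ ∃ b, φ b * α = 1 := by
  obtain ⟨t, hts, ht0, r, hr, hrt⟩ := exists_isUnit_eq_leadingCoeff_mul_prod hf hsplit hu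
  obtain ⟨α, hα⟩ := Multiset.exists_mem_of_ne_zero ht0
  obtain ⟨t', rfl⟩ := Multiset.exists_cons_of_mem hα
  obtain ⟨r', hr'⟩ := exists_algebraMap_eq_leadingCoeff_mul_prod hsplit
    ((Multiset.le_cons_self t' α).trans hts)
  refine ⟨α, isRoot_of_mem_roots (Multiset.mem_of_le hts (Multiset.mem_cons_self α t')),
    r' * hr.unit⁻¹, ?_⟩
  rw [Multiset.prod_cons, mul_left_comm, ← hr'] at hrt
  rw [map_mul, mul_right_comm, mul_comm (φ r'), ← hrt, ← map_mul, hr.mul_val_inv, map_one]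


theorem exists_isRoot_algebraMap_or_mul_eq_one (hf : f.map (residue R) ≠ 0)
    (hsplit : (f.map φ).Splits) (hdeg : 0 < f.natDegree) : (∃ a, (f.map φ).IsRoot (φ a)) ∨
      ∃ b ∈ maximalIdeal R, ∃ α, (f.map φ).IsRoot α ∧ φ b * α = 1 := by
  have hinj := IsFractionRing.injective R K
  by_cases hu : IsUnit f.leadingCoeff
  · obtain ⟨α, hα⟩ := hsplit.exists_eval_eq_zero <| by
      rw [degree_map_eq_of_injective hinj, degree_eq_natDegree (ne_zero_of_natDegree_gt hdeg)]
      exact_mod_cast hdeg.ne'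
    have hf0 : f.map φ ≠ 0 := (Polynomial.map_ne_zero_iff hinj).mpr (ne_zero_of_natDegree_gt hdeg)
    obtain ⟨r, hr⟩ := exists_algebraMap_eq_leadingCoeff_mul_prod hsplit
      (Multiset.singleton_le.mpr ((mem_roots hf0).mpr hα))
    refine .inl ⟨hu.unit⁻¹ * r, ?_⟩
    rwa [map_mul, hr, Multiset.prod_singleton, ← mul_assoc, ← map_mul, hu.val_inv_mul,
      map_one, one_mul]
  · obtain ⟨α, hα, b, hb⟩ := exists_isRoot_map_mul_eq_one hf hsplit hu
    by_cases hbu : IsUnit b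
    · refine .inl ⟨↑hbu.unit⁻¹, ?_⟩
      rwa [map_units_inv, IsUnit.unit_spec, ← eq_inv_of_mul_eq_one_right hb]
    · exact .inr ⟨b, (mem_maximalIdeal _).mpr hbu, α, hα, hb⟩

theorem exists_linear_factor [IsDomain R] (hf : f.map (residue R) ≠ 0)
    (hsplit : (f.map φ).Splits) (hdeg : 0 < f.natDegree) : ∃ g : R[X], g.natDegree < f.natDegree ∧
      ((∃ a, f = (X - C a) * g) ∨ ∃ b ∈ maximalIdeal R, f = (1 - C b * X) * g) := by
  rcases exists_isRoot_algebraMap_or_mul_eq_one hf hsplit hdeg with ⟨a, ha⟩ | ⟨b, hb, α, hα, hbα⟩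
  · have hfa := mul_divByMonic_eq_iff_isRoot.mpr (ha.of_map (IsFractionRing.injective R K))
    refine ⟨f /ₘ (X - C a), ?_, .inl ⟨a, hfa.symm⟩⟩
    rw [natDegree_divByMonic _ (monic_X_sub_C a), natDegree_X_sub_C]
    omega
  · obtain ⟨g, rfl⟩ := exists_eq_one_sub_C_mul_X_mul hα hbα
    have hlin : (1 - C b * X).natDegree = 1 :=
      natDegree_one_sub_C_mul_X fun hb0 => by simp [hb0] at hbα
    have hg0 : g ≠ 0 := by rintro rfl; simp at hdeg
    refine ⟨g, ?_, .inr ⟨b, hb, rfl⟩⟩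
    rw [natDegree_mul (ne_zero_of_natDegree_gt (hlin ▸ zero_lt_one)) hg0, hlin]
    omega

end Polynomial

section Factorization

open IsLocalRing

variable {R : Type*} [CommRing R] [IsLocalRing R]

def HasLinearFactorization (f : R[X]) : Prop :=
  ∃ (m n : ℕ) (a : Fin m → R) (b : Fin n → R) (c : Rˣ),
    (∀ j, b j ∈ maximalIdeal R) ∧
    f = C (c : R) * (∏ i, (X - C (a i))) * (∏ j, (1 - C (b j) * X))

namespace HasLinearFactorization

theorem C_unit (u : Rˣ) : HasLinearFactorization (C (u : R)) :=
  ⟨0, 0, Fin.elim0, Fin.elim0, u, fun j => j.elim0, by simp⟩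

variable {g : R[X]}

theorem X_sub_C_mul (hg : HasLinearFactorization g) (a : R) :
    HasLinearFactorization ((X - C a) * g) := by
  obtain ⟨m, n, as, bs, c, hbs, rfl⟩ := hg
  refine ⟨m + 1, n, Fin.cons a as, bs, c, hbs, ?_⟩
  simp only [Fin.prod_univ_succ, Fin.cons_zero, Fin.cons_succ]
  ring

theorem one_sub_C_mul_X_mul (hg : HasLinearFactorization g) {b : R} (hb : b ∈ maximalIdeal R) :
    HasLinearFactorization ((1 - C b * X) * g) := by
  obtain ⟨m, n, as, bs, c, hbs, rfl⟩ := hg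
  refine ⟨m, n + 1, as, Fin.cons b bs, c, Fin.cases hb hbs, ?_⟩
  simp only [Fin.prod_univ_succ, Fin.cons_zero, Fin.cons_succ]
  ring

end HasLinearFactorization

end Factorization

/-- Let `R` be a local integral domain (maximal ideal `m_R`, residue field
`k = R/m_R`) that is integrally closed in its field of fractions `K`.  Let `f ∈ R[z]` be a
polynomial whose image in `k[z]` is nonzero and which splits into a product of degree-one
polynomials over `K`.  Then `f = c · ∏ᵢ (z − aᵢ) · ∏ⱼ (1 − bⱼ·z)` for some `aᵢ ∈ R`,
`bⱼ ∈ m_R` and a unit `c ∈ R^×`. -/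
theorem statement0 (R : Type*) [CommRing R] [IsDomain R] [IsLocalRing R]
    [IsIntegrallyClosed R] (f : R[X])
    (hf : f.map (IsLocalRing.residue R) ≠ 0)
    (hsplit : (f.map (algebraMap R (FractionRing R))).Splits) :
    ∃ (m n : ℕ) (a : Fin m → R) (b : Fin n → R) (c : Rˣ),
      (∀ j, b j ∈ IsLocalRing.maximalIdeal R) ∧
      f = C (c : R) * (∏ i, (X - C (a i))) * (∏ j, (1 - C (b j) * X)) := by
  show HasLinearFactorization f
  induction hN : f.natDegree using Nat.strong_induction_on generalizing f with
  | _ N ih =>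
  obtain hdeg | hdeg := Nat.eq_zero_or_pos f.natDegree
  · rw [eq_C_of_natDegree_eq_zero hdeg] at hf ⊢
    rw [Polynomial.map_C, Ne, C_eq_zero, ← Ne, IsLocalRing.residue_ne_zero_iff_isUnit] at hf
    exact HasLinearFactorization.C_unit hf.unit
  obtain ⟨g, hlt, hfg⟩ := exists_linear_factor hf hsplit hdeg
  have hgf : g ∣ f := by rcases hfg with ⟨a, rfl⟩ | ⟨b, -, rfl⟩ <;> exact dvd_mul_left g _
  have hf0 : f.map (algebraMap R (FractionRing R)) ≠ 0 := fun h => hf (by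
    rw [(Polynomial.map_eq_zero_iff (IsFractionRing.injective R _)).mp h, Polynomial.map_zero])
  have hg := ih _ (hN ▸ hlt) g (ne_zero_of_dvd_ne_zero hf (Polynomial.map_dvd _ hgf))
    (hsplit.of_dvd hf0 (Polynomial.map_dvd _ hgf)) rfl
  rcases hfg with ⟨a, rfl⟩ | ⟨b, hb, rfl⟩
  exacts [hg.X_sub_C_mul a, hg.one_sub_C_mul_X_mul hb]
end

section
/- Let T be a nonempty set of O_E-lattices in E^n that is stable under scaling, i.e. if L ∈ T and a ∈ E^× then a·L ∈ T. Then the following three conditions are equivalent: (i) for every pair (x, y) of nonzero elements of E^n, either μ_L(x) ≥ μ_L(y) for every L ∈ T, or μ_L(x) ≤ μ_L(y) for every L ∈ T; (ii) for all L, L' ∈ T, either L ⊆ L' or L' ⊆ L; (iii) there exist an integer r ≥ 0 and O_E-lattices L^0 ⊋ L^1 ⊋ … ⊋ L^r ⊋ m_E·L^0 in E^n such that T = {a·L^i : a ∈ E^×, 0 ≤ i ≤ r}. -/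
/-!
The infimum defining `μ_L(x)` is attained, so `x ∈ L ↔ μ_L(x) ≤ 1`, and `μ_L(x) < μ_L(y)` yields a
scalar `a` with `x ∈ a • L` but `y ∉ a • L`; hence comparability of the norms is equivalent to `T`
being totally ordered by inclusion. If it is, fix `L₀ ∈ T` and a uniformizer `π`: every member of
`T` has a scaling `M` by a power of `π` with `π • L₀ ⊊ M ⊆ L₀`. These scalings form a chain, which
is finite because a lattice `M` with `π • L₀ ⊆ M ⊆ L₀` is determined by the finitely
many representatives of `L₀ / π • L₀` it contains; enumerating it gives `L⁰ ⊋ ⋯ ⊋ Lʳ ⊋ m_E • L⁰`.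
Conversely, in such a chain `c • Lⁱ ⊆ m_E • L⁰ ⊆ Lʳ ⊆ Lʲ` whenever `|c| < 1`, while `|c| = 1`
fixes every lattice, so any two scalings of members of the chain are comparable.
-/

noncomputable section

open scoped Pointwise

/-- The data of a complete discrete valuation field `E` with finite residue field of
cardinality `q`, packaged via its standard absolute value `v : E → ℝ` (so `v π = q⁻¹` for a
uniformizer `π`, `v 0 = 0`). -/
structure NonarchCDVF (E : Type*) [Field E] (q : ℕ) : Type _ where
  /-- the standard absolute value -/
  v : E → ℝ
  v_zero : v 0 = 0
  v_pos : ∀ x : E, x ≠ 0 → 0 < v x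
  v_mul : ∀ x y : E, v (x * y) = v x * v y
  v_add : ∀ x y : E, v (x + y) ≤ max (v x) (v y)
  one_lt_q : 1 < q
  /-- the valuation is discrete with value group `q^ℤ` -/
  discrete : ∀ x : E, x ≠ 0 → ∃ m : ℤ, v x = (q : ℝ) ^ m
  exists_uniformizer : ∃ π : E, v π = (q : ℝ) ^ (-1 : ℤ)
  /-- the residue field `O_E/m_E` is finite of cardinality `q` -/
  residue_card : ∃ S : Finset E, S.card = q ∧
    ∀ x : E, v x ≤ 1 → ∃! s, s ∈ S ∧ v (x - s) < 1
  /-- `E` is complete: every Cauchy sequence converges -/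
  complete : ∀ f : ℕ → E,
    (∀ ε : ℝ, 0 < ε → ∃ N : ℕ, ∀ m ≥ N, ∀ k ≥ N, v (f m - f k) < ε) →
    ∃ l : E, ∀ ε : ℝ, 0 < ε → ∃ N : ℕ, ∀ m ≥ N, v (f m - l) < ε

namespace NonarchCDVF

variable {E : Type*} [Field E] {q : ℕ}

/-- The `O_E`-submodule of `E^n` generated by a finite set `B`
(`O_E = {a : E | v a ≤ 1}` is the valuation ring). -/
def latticeOf (D : NonarchCDVF E q) {n : ℕ} (B : Finset (Fin n → E)) :
    Set (Fin n → E) :=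
  {x | ∃ c : (Fin n → E) → E, (∀ b, D.v (c b) ≤ 1) ∧ x = ∑ b ∈ B, c b • b}

/-- An `O_E`-lattice in `E^n`: a finitely generated `O_E`-submodule of `E^n`
which spans `E^n` over `E`. -/
def IsLattice (D : NonarchCDVF E q) {n : ℕ} (L : Set (Fin n → E)) : Prop :=
  ∃ B : Finset (Fin n → E),
    L = D.latticeOf B ∧ Submodule.span E (B : Set (Fin n → E)) = ⊤

/-- The norm associated to a lattice `L`: `μ_L(x) = min {v a : a ∈ E, x ∈ a • L}`. -/
def latticeNorm (D : NonarchCDVF E q) {n : ℕ} (L : Set (Fin n → E))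
    (x : Fin n → E) : ℝ :=
  sInf {r : ℝ | ∃ a : E, D.v a = r ∧ ∃ y ∈ L, x = a • y}

/-- A norm on `E^n`. -/
def IsNorm (D : NonarchCDVF E q) {n : ℕ} (μ : (Fin n → E) → ℝ) : Prop :=
  (∀ (a : E) (x : Fin n → E), μ (a • x) = D.v a * μ x) ∧
  (∀ x y : Fin n → E, μ (x + y) ≤ max (μ x) (μ y)) ∧
  (∀ x : Fin n → E, x ≠ 0 → 0 < μ x)

/-- The image `m_E • L` of a set `L ⊆ E^n` under the maximal ideal
`m_E = {a : E | v a < 1}`. -/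
def maxIdealSmul (D : NonarchCDVF E q) {n : ℕ} (L : Set (Fin n → E)) :
    Set (Fin n → E) :=
  {z | ∃ a : E, D.v a < 1 ∧ ∃ y ∈ L, z = a • y}

end NonarchCDVF

theorem exists_strictAnti_fin_of_isChain {α : Type*} [PartialOrder α] {s : Set α}
    (hs : IsChain (· ≤ ·) s) (hfin : s.Finite) (hne : s.Nonempty) :
    ∃ (r : ℕ) (f : Fin (r + 1) → α), StrictAnti f ∧ Set.range f = s := by
  classical
  let := hs.linearOrder
  have := hfin.fintype
  have := hne.to_subtype
  obtain ⟨r, hr⟩ := Nat.exists_eq_add_one_of_ne_zero (Fintype.card_pos_iff.2 ‹_›).ne'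
  let e := monoEquivOfFin s hr
  refine ⟨r, fun i => e i.rev, fun i j hij => e.strictMono (Fin.rev_lt_rev.2 hij), ?_⟩
  ext x
  refine ⟨?_, fun hx => ⟨(e.symm ⟨x, hx⟩).rev, by simp⟩⟩
  rintro ⟨i, rfl⟩
  exact (e i.rev).2

theorem sInf_mem_of_subset_range_zpow {b ε : ℝ} (hb : 1 < b) (hε : 0 < ε) {S : Set ℝ}
    (hne : S.Nonempty) (hS : S ⊆ Set.range (b ^ · : ℤ → ℝ)) (hlb : ∀ r ∈ S, ε ≤ r) :
    sInf S ∈ S := by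
  obtain ⟨N, hN⟩ := exists_pow_lt_of_lt_one hε (inv_lt_one_of_one_lt₀ hb)
  have hbdd : ∀ m : ℤ, b ^ m ∈ S → -(N : ℤ) ≤ m := fun m hm => by
    by_contra! h
    have := zpow_lt_zpow_right₀ hb h
    rw [zpow_neg, zpow_natCast, ← inv_pow] at this
    linarith [hlb _ hm]
  obtain ⟨r, hr⟩ := hne
  obtain ⟨m, rfl⟩ := hS hr
  obtain ⟨k, hk, hleast⟩ := Int.exists_least_of_bdd ⟨_, hbdd⟩ ⟨m, hr⟩
  refine IsLeast.csInf_mem ⟨hk, fun s hs => ?_⟩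
  obtain ⟨l, rfl⟩ := hS hs
  exact zpow_le_zpow_right₀ hb.le (hleast l hs)

namespace NonarchCDVF

variable {E : Type*} [Field E] {q : ℕ} (D : NonarchCDVF E q) {n : ℕ}

theorem v_one : D.v 1 = 1 := by
  have h := D.v_mul 1 1
  rw [mul_one] at h
  nlinarith [D.v_pos 1 one_ne_zero]

theorem v_nonneg (a : E) : 0 ≤ D.v a := by
  rcases eq_or_ne a 0 with rfl | ha
  · exact D.v_zero.ge
  · exact (D.v_pos a ha).le

theorem v_neg (a : E) : D.v (-a) = D.v a := by
  have h := D.v_mul (-1) (-1)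
  rw [neg_mul_neg, one_mul, D.v_one] at h
  have h1 : D.v (-1) = 1 := by nlinarith [D.v_nonneg (-1)]
  rw [neg_eq_neg_one_mul, D.v_mul, h1, one_mul]

theorem v_inv {a : E} (ha : a ≠ 0) : D.v a⁻¹ = (D.v a)⁻¹ :=
  eq_inv_of_mul_eq_one_left (by rw [← D.v_mul, inv_mul_cancel₀ ha, D.v_one])

theorem v_pow (a : E) (k : ℕ) : D.v (a ^ k) = D.v a ^ k := by
  induction k with
  | zero => simp [D.v_one]
  | succ k ih => rw [pow_succ, D.v_mul, ih, pow_succ]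

theorem one_lt_q_real (D : NonarchCDVF E q) : (1 : ℝ) < q := by exact_mod_cast D.one_lt_q

theorem exists_v_eq_inv_q : ∃ π : E, π ≠ 0 ∧ D.v π = (q : ℝ)⁻¹ := by
  obtain ⟨π, hπ⟩ := D.exists_uniformizer
  rw [zpow_neg_one] at hπ
  refine ⟨π, fun h => ?_, hπ⟩
  have : (0 : ℝ) < (q : ℝ)⁻¹ := inv_pos.2 (zero_lt_one.trans D.one_lt_q_real)
  rw [← hπ, h, D.v_zero] at this
  exact this.false

theorem v_le_inv_q_of_lt_one {a : E} (ha : D.v a < 1) : D.v a ≤ (q : ℝ)⁻¹ := by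
  rcases eq_or_ne a 0 with rfl | h
  · rw [D.v_zero]; positivity
  obtain ⟨m, hm⟩ := D.discrete a h
  rw [hm] at ha ⊢
  have hm0 : m ≤ -1 := by
    by_contra! hc
    exact (one_le_zpow₀ D.one_lt_q_real.le (by omega : 0 ≤ m)).not_gt ha
  simpa using zpow_le_zpow_right₀ D.one_lt_q_real.le hm0

theorem v_inv_mul_le_one {π a : E} (hπ : D.v π = (q : ℝ)⁻¹) (ha : D.v a < 1) :
    D.v (π⁻¹ * a) ≤ 1 := by
  have hq : (0 : ℝ) < q := zero_lt_one.trans D.one_lt_q_real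
  have hπ0 : π ≠ 0 := by
    rintro rfl
    rw [D.v_zero] at hπ
    exact (inv_pos.2 hq).ne hπ
  rw [D.v_mul, D.v_inv hπ0, hπ, inv_inv]
  calc (q : ℝ) * D.v a ≤ q * (q : ℝ)⁻¹ := by gcongr; exact D.v_le_inv_q_of_lt_one ha
    _ = 1 := mul_inv_cancel₀ hq.ne'

theorem eventually_v_pow_mul_le_one {π : E} (hπ : D.v π < 1) (a : E) :
    ∀ᶠ N in Filter.atTop, D.v (π ^ N * a) ≤ 1 := by
  simp_rw [D.v_mul, D.v_pow]
  have := (tendsto_pow_atTop_nhds_zero_of_lt_one (D.v_nonneg π) hπ).mul_const (D.v a)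
  rw [zero_mul] at this
  exact this.eventually_le_const one_pos

/-- The valuation ring `O_E`. -/
def integers : Subring E where
  carrier := {a | D.v a ≤ 1}
  mul_mem' {a b} ha hb := by
    change D.v (a * b) ≤ 1
    rw [D.v_mul]
    exact mul_le_one₀ ha (D.v_nonneg b) hb
  one_mem' := D.v_one.le
  add_mem' {a b} ha hb := (D.v_add a b).trans (max_le ha hb)
  zero_mem' := by simp [D.v_zero]
  neg_mem' {a} ha := by simpa [D.v_neg] using ha

theorem latticeOf_eq_span (B : Finset (Fin n → E)) :
    D.latticeOf B = Submodule.span D.integers (B : Set (Fin n → E)) := by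
  classical
  ext x
  rw [SetLike.mem_coe, Submodule.mem_span_finset]
  constructor
  · rintro ⟨c, hc, rfl⟩
    refine ⟨fun b => if b ∈ B then ⟨c b, hc b⟩ else 0, fun b hb => ?_, ?_⟩
    · by_contra h
      exact hb (if_neg h)
    · exact Finset.sum_congr rfl fun b hb => by simp only [if_pos hb]; rfl
  · rintro ⟨f, -, rfl⟩
    exact ⟨fun b => f b, fun b => (f b).2, rfl⟩

theorem subset_latticeOf (B : Finset (Fin n → E)) :
    (B : Set (Fin n → E)) ⊆ D.latticeOf B := by
  rw [latticeOf_eq_span]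
  exact Submodule.subset_span

theorem latticeNorm_le {L : Set (Fin n → E)} {x y : Fin n → E} {a : E} (hy : y ∈ L)
    (hxy : x = a • y) : D.latticeNorm L x ≤ D.v a :=
  csInf_le ⟨0, by rintro _ ⟨b, rfl, -⟩; exact D.v_nonneg b⟩ ⟨a, rfl, y, hy, hxy⟩

namespace IsLattice

variable {D} {L L' L₀ : Set (Fin n → E)} {π : E}

theorem exists_submodule (hL : D.IsLattice L) :
    ∃ Λ : Submodule D.integers (Fin n → E), (Λ : Set (Fin n → E)) = L := by
  obtain ⟨B, rfl, -⟩ := hL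
  exact ⟨_, (D.latticeOf_eq_span B).symm⟩

theorem zero_mem (hL : D.IsLattice L) : (0 : Fin n → E) ∈ L := by
  obtain ⟨Λ, rfl⟩ := hL.exists_submodule
  exact Λ.zero_mem

theorem add_mem (hL : D.IsLattice L) {x y : Fin n → E} (hx : x ∈ L) (hy : y ∈ L) :
    x + y ∈ L := by
  obtain ⟨Λ, rfl⟩ := hL.exists_submodule
  exact Λ.add_mem hx hy

theorem sub_mem (hL : D.IsLattice L) {x y : Fin n → E} (hx : x ∈ L) (hy : y ∈ L) :
    x - y ∈ L := by
  obtain ⟨Λ, rfl⟩ := hL.exists_submodule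
  exact Λ.sub_mem hx hy

theorem smul_mem (hL : D.IsLattice L) {a : E} (ha : D.v a ≤ 1) {x : Fin n → E} (hx : x ∈ L) :
    a • x ∈ L := by
  obtain ⟨Λ, rfl⟩ := hL.exists_submodule
  exact Λ.smul_mem ⟨a, ha⟩ hx

theorem sum_mem (hL : D.IsLattice L) {ι : Type*} {s : Finset ι} {f : ι → Fin n → E}
    (hf : ∀ i ∈ s, f i ∈ L) : ∑ i ∈ s, f i ∈ L := by
  obtain ⟨Λ, rfl⟩ := hL.exists_submodule
  exact Λ.sum_mem hf

theorem smul_subset (hL : D.IsLattice L) {a : E} (ha : D.v a ≤ 1) : a • L ⊆ L := by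
  rintro _ ⟨x, hx, rfl⟩
  exact hL.smul_mem ha hx

theorem smul_eq_self (hL : D.IsLattice L) {a : E} (ha : D.v a = 1) : a • L = L := by
  have ha0 : a ≠ 0 := by rintro rfl; simp [D.v_zero] at ha
  refine (hL.smul_subset ha.le).antisymm fun x hx =>
    ⟨a⁻¹ • x, hL.smul_mem ?_ hx, smul_inv_smul₀ ha0 x⟩
  rw [D.v_inv ha0, ha, inv_one]

theorem exists_bound (hL : D.IsLattice L) :
    ∃ C : ℝ, 0 < C ∧ ∀ x ∈ L, ∀ j, D.v (x j) ≤ C := by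
  obtain ⟨B, rfl, -⟩ := hL
  obtain ⟨C, hC0, hC⟩ := ((Filter.eventually_gt_atTop 0).and
    ((Filter.eventually_all_finset B).2 fun b _ =>
      Filter.eventually_all.2 fun j => Filter.eventually_ge_atTop (D.v (b j)))).exists
  refine ⟨C, hC0, ?_⟩
  rintro _ ⟨c, hc, rfl⟩ j
  rw [Finset.sum_apply]
  refine Finset.sum_induction _ (D.v · ≤ C) (fun a b ha hb => (D.v_add a b).trans (max_le ha hb))
    (by rw [D.v_zero]; exact hC0.le) fun b hb => ?_
  rw [Pi.smul_apply, smul_eq_mul, D.v_mul]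
  exact (mul_le_of_le_one_left (D.v_nonneg _) (hc b)).trans (hC b hb j)

theorem eventually_pow_smul_mem (hL : D.IsLattice L) (hπ : D.v π < 1) (x : Fin n → E) :
    ∀ᶠ N in Filter.atTop, π ^ N • x ∈ L := by
  obtain ⟨B, rfl, hspan⟩ := id hL
  obtain ⟨f, -, rfl⟩ := Submodule.mem_span_finset.1 (hspan ▸ Submodule.mem_top (x := x))
  filter_upwards [(Filter.eventually_all_finset B).2 fun b _ =>
    D.eventually_v_pow_mul_le_one hπ (f b)] with N hN
  rw [Finset.smul_sum]
  exact hL.sum_mem fun b hb => by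
    rw [smul_smul]
    exact hL.smul_mem (hN b hb) (D.subset_latticeOf B hb)

theorem exists_pow_smul_subset (hL : D.IsLattice L) (hL' : D.IsLattice L') (hπ : D.v π < 1) :
    ∃ N : ℕ, π ^ N • L ⊆ L' := by
  obtain ⟨B, rfl, -⟩ := hL
  obtain ⟨N, hN⟩ := ((Filter.eventually_all_finset B).2 fun b _ =>
    hL'.eventually_pow_smul_mem hπ b).exists
  refine ⟨N, ?_⟩
  rintro _ ⟨_, ⟨c, hc, rfl⟩, rfl⟩
  simp only [Finset.smul_sum]
  exact hL'.sum_mem fun b hb => by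
    rw [smul_comm]
    exact hL'.smul_mem (hc b) (hN b hb)

theorem exists_v_eq_latticeNorm (hL : D.IsLattice L) {x : Fin n → E} (hx : x ≠ 0) :
    ∃ a : E, D.v a = D.latticeNorm L x ∧ ∃ y ∈ L, x = a • y := by
  obtain ⟨C, hC0, hC⟩ := hL.exists_bound
  obtain ⟨j, hj⟩ := Function.ne_iff.1 hx
  obtain ⟨π, hπ0, hπ⟩ := D.exists_v_eq_inv_q
  suffices h : D.latticeNorm L x ∈ {r | ∃ a : E, D.v a = r ∧ ∃ y ∈ L, x = a • y} from h
  refine sInf_mem_of_subset_range_zpow D.one_lt_q_real (div_pos (D.v_pos _ hj) hC0) ?_ ?_ ?_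
  · obtain ⟨N, hN⟩ := (hL.eventually_pow_smul_mem
      (hπ ▸ inv_lt_one_of_one_lt₀ D.one_lt_q_real) x).exists
    exact ⟨_, (π ^ N)⁻¹, rfl, _, hN, (inv_smul_smul₀ (pow_ne_zero N hπ0) x).symm⟩
  · rintro _ ⟨a, rfl, y, -, rfl⟩
    obtain ⟨m, hm⟩ := D.discrete a (left_ne_zero_of_smul hx)
    exact ⟨m, hm.symm⟩
  · rintro _ ⟨a, rfl, y, hy, rfl⟩
    rw [div_le_iff₀ hC0, Pi.smul_apply, smul_eq_mul, D.v_mul]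
    exact mul_le_mul_of_nonneg_left (hC y hy j) (D.v_nonneg a)

theorem mem_iff_latticeNorm_le_one (hL : D.IsLattice L) {x : Fin n → E} :
    x ∈ L ↔ D.latticeNorm L x ≤ 1 := by
  refine ⟨fun hx => D.v_one ▸ D.latticeNorm_le hx (one_smul E x).symm, fun h => ?_⟩
  rcases eq_or_ne x 0 with rfl | hx
  · exact hL.zero_mem
  obtain ⟨a, ha, y, hy, rfl⟩ := hL.exists_v_eq_latticeNorm hx
  exact hL.smul_mem (ha ▸ h) hy

theorem exists_smul_mem_notMem_smul (hL : D.IsLattice L) {x y : Fin n → E} (hx : x ≠ 0)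
    (hxy : D.latticeNorm L x < D.latticeNorm L y) :
    ∃ a : E, a ≠ 0 ∧ x ∈ a • L ∧ y ∉ a • L := by
  obtain ⟨a, ha, z, hz, rfl⟩ := hL.exists_v_eq_latticeNorm hx
  refine ⟨a, left_ne_zero_of_smul hx, ⟨z, hz, rfl⟩, ?_⟩
  rintro ⟨w, hw, rfl⟩
  exact (D.latticeNorm_le hw rfl).not_gt (ha ▸ hxy)

theorem not_subset_smul (hn : 1 ≤ n) (hL : D.IsLattice L) (hπ : D.v π < 1) :
    ¬ L ⊆ π • L := by
  intro h
  have hx : (fun _ => 1 : Fin n → E) ≠ 0 := Function.ne_iff.2 ⟨⟨0, hn⟩, one_ne_zero⟩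
  obtain ⟨a, ha, y, hy, hxy⟩ := hL.exists_v_eq_latticeNorm hx
  obtain ⟨z, hz, rfl⟩ := h hy
  have hle := D.latticeNorm_le hz (hxy.trans (smul_smul a π z))
  have ha0 : 0 < D.v a := D.v_pos a (left_ne_zero_of_smul (hxy ▸ hx))
  rw [D.v_mul, ha] at hle
  exact (mul_lt_of_lt_one_right (ha ▸ ha0) hπ).not_ge hle

theorem zpow_smul_subset_zpow_smul (hL : D.IsLattice L) (hπ0 : π ≠ 0) (hπ : D.v π ≤ 1)
    {k k' : ℤ} (h : k ≤ k') : π ^ k' • L ⊆ π ^ k • L := by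
  obtain ⟨m, hm⟩ := Int.eq_ofNat_of_zero_le (sub_nonneg.2 h)
  rw [show k' = k + m by omega, zpow_add₀ hπ0, zpow_natCast, mul_smul]
  exact Set.smul_set_mono
    (hL.smul_subset (by rw [D.v_pow]; exact pow_le_one₀ (D.v_nonneg π) hπ))

theorem zpow_smul_subset_self_iff (hn : 1 ≤ n) (hL : D.IsLattice L) (hπ0 : π ≠ 0)
    (hπ : D.v π < 1) {k : ℤ} : π ^ k • L ⊆ L ↔ 0 ≤ k := by
  refine ⟨fun h => ?_, fun hk => by simpa using hL.zpow_smul_subset_zpow_smul hπ0 hπ.le hk⟩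
  by_contra! hk
  have := (hL.zpow_smul_subset_zpow_smul hπ0 hπ.le (by omega : k ≤ -1)).trans h
  rw [zpow_neg_one, ← Set.subset_smul_set_iff₀ hπ0] at this
  exact hL.not_subset_smul hn hπ this

theorem exists_zpow_smul_subset_not_subset (hn : 1 ≤ n) (hL : D.IsLattice L)
    (hL₀ : D.IsLattice L₀) (hπ0 : π ≠ 0) (hπ : D.v π < 1) :
    ∃ k : ℤ, π ^ k • L ⊆ L₀ ∧ ¬ π ^ (k - 1) • L ⊆ L₀ := by
  obtain ⟨N, hN⟩ := hL.exists_pow_smul_subset hL₀ hπ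
  obtain ⟨M, hM⟩ := hL₀.exists_pow_smul_subset hL hπ
  have hbdd : ∀ k : ℤ, π ^ k • L ⊆ L₀ → -(M : ℤ) ≤ k := fun k hk => by
    have : π ^ (k + M) • L₀ ⊆ L₀ := by
      rw [zpow_add₀ hπ0, zpow_natCast, mul_smul]
      exact (Set.smul_set_mono hM).trans hk
    have := (hL₀.zpow_smul_subset_self_iff hn hπ0 hπ).1 this
    omega
  obtain ⟨k, hk, hleast⟩ := Int.exists_least_of_bdd ⟨_, hbdd⟩ ⟨N, by rwa [zpow_natCast]⟩
  exact ⟨k, hk, fun h => by have := hleast _ h; omega⟩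

theorem exists_zpow_smul_between (hn : 1 ≤ n) (hL : D.IsLattice L) (hL₀ : D.IsLattice L₀)
    (hπ0 : π ≠ 0) (hπ : D.v π < 1)
    (hcomp : ∀ k : ℤ, π ^ k • L ⊆ π • L₀ ∨ π • L₀ ⊆ π ^ k • L) :
    ∃ k : ℤ, π • L₀ ⊂ π ^ k • L ∧ π ^ k • L ⊆ L₀ := by
  obtain ⟨k, hk, hk'⟩ := hL.exists_zpow_smul_subset_not_subset hn hL₀ hπ0 hπ
  have hnot : ¬ π ^ k • L ⊆ π • L₀ := fun h => hk' <| by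
    rwa [Set.subset_smul_set_iff₀ hπ0, smul_smul, ← zpow_neg_one, ← zpow_add₀ hπ0,
      neg_add_eq_sub] at h
  exact ⟨k, ⟨(hcomp k).resolve_left hnot, hnot⟩, hk⟩

theorem exists_finite_sub_mem_smul (hL₀ : D.IsLattice L₀) (hπ0 : π ≠ 0)
    (hπ : D.v π = (q : ℝ)⁻¹) :
    ∃ V : Set (Fin n → E), V.Finite ∧ ∀ x ∈ L₀, ∃ w ∈ V, x - w ∈ π • L₀ := by
  obtain ⟨S, -, hS⟩ := D.residue_card
  obtain ⟨B, rfl, -⟩ := id hL₀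
  refine ⟨Set.range fun f : B → S => ∑ b : B, (f b : E) • (b : Fin n → E),
    Set.finite_range _, ?_⟩
  rintro _ ⟨c, hc, rfl⟩
  choose s hsS hs using fun b => (hS (c b) (hc b)).exists
  refine ⟨_, ⟨fun b => ⟨s b, hsS b⟩, rfl⟩, ∑ b ∈ B, (π⁻¹ * (c b - s b)) • b,
    hL₀.sum_mem fun b hb =>
      hL₀.smul_mem (D.v_inv_mul_le_one hπ (hs b)) (D.subset_latticeOf B hb), ?_⟩
  simp only [Finset.sum_coe_sort B (fun b => s b • b), Finset.smul_sum, smul_smul,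
    mul_inv_cancel_left₀ hπ0, sub_smul, Finset.sum_sub_distrib]

theorem finite_setOf_smul_subset_subset (hL₀ : D.IsLattice L₀) (hπ0 : π ≠ 0)
    (hπ : D.v π = (q : ℝ)⁻¹) :
    {M : Set (Fin n → E) | D.IsLattice M ∧ π • L₀ ⊆ M ∧ M ⊆ L₀}.Finite := by
  obtain ⟨V, hV, hrep⟩ := hL₀.exists_finite_sub_mem_smul hπ0 hπ
  refine Set.Finite.of_finite_image (f := (· ∩ V)) (hV.finite_subsets.subset ?_) ?_
  · rintro _ ⟨M, -, rfl⟩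
    exact Set.inter_subset_right
  have key : ∀ M M' : Set (Fin n → E), D.IsLattice M → π • L₀ ⊆ M → M ⊆ L₀ →
      D.IsLattice M' → π • L₀ ⊆ M' → M ∩ V ⊆ M' ∩ V → M ⊆ M' := by
    intro M M' hM hM₀ hML₀ hM' hM'₀ hV x hx
    obtain ⟨w, hwV, hxw⟩ := hrep x (hML₀ hx)
    have hwM' : w ∈ M' := (hV ⟨by simpa using hM.sub_mem hx (hM₀ hxw), hwV⟩).1
    simpa using hM'.add_mem hwM' (hM'₀ hxw)
  rintro M ⟨hM, hM₀, hML₀⟩ M' ⟨hM', hM'₀, hM'L₀⟩ h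
  exact (key M M' hM hM₀ hML₀ hM' hM'₀ h.le).antisymm (key M' M hM' hM'₀ hM'L₀ hM hM₀ h.ge)

end IsLattice

theorem maxIdealSmul_eq {L : Set (Fin n → E)} (hL : D.IsLattice L) {π : E} (hπ0 : π ≠ 0)
    (hπ : D.v π = (q : ℝ)⁻¹) : D.maxIdealSmul L = π • L := by
  ext z
  constructor
  · rintro ⟨a, ha, y, hy, rfl⟩
    exact ⟨(π⁻¹ * a) • y, hL.smul_mem (D.v_inv_mul_le_one hπ ha) hy,
      by simp only [smul_smul, mul_inv_cancel_left₀ hπ0]⟩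
  · rintro ⟨y, hy, rfl⟩
    exact ⟨π, hπ ▸ inv_lt_one_of_one_lt₀ D.one_lt_q_real, y, hy, rfl⟩

variable {D}

theorem pairwise_subset_of_latticeNorm_comparable {T : Set (Set (Fin n → E))}
    (hTlat : ∀ L ∈ T, D.IsLattice L)
    (hnorm : ∀ x y : Fin n → E, x ≠ 0 → y ≠ 0 →
      (∀ L ∈ T, D.latticeNorm L y ≤ D.latticeNorm L x) ∨
      (∀ L ∈ T, D.latticeNorm L x ≤ D.latticeNorm L y)) :
    ∀ L ∈ T, ∀ L' ∈ T, L ⊆ L' ∨ L' ⊆ L := by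
  intro L hL L' hL'
  by_contra! h
  obtain ⟨⟨x, hxL, hxL'⟩, ⟨y, hyL', hyL⟩⟩ := And.imp Set.not_subset.1 Set.not_subset.1 h
  have hx : x ≠ 0 := fun h => hxL' (h ▸ (hTlat L' hL').zero_mem)
  have hy : y ≠ 0 := fun h => hyL (h ▸ (hTlat L hL).zero_mem)
  simp only [(hTlat L hL).mem_iff_latticeNorm_le_one, (hTlat L' hL').mem_iff_latticeNorm_le_one]
    at hxL hxL' hyL hyL'
  rcases hnorm x y hx hy with h | h
  · exact hyL ((h L hL).trans hxL)
  · exact hxL' ((h L' hL').trans hyL')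

theorem latticeNorm_comparable_of_pairwise_subset {T : Set (Set (Fin n → E))}
    (hTlat : ∀ L ∈ T, D.IsLattice L) (hTscale : ∀ L ∈ T, ∀ a : E, a ≠ 0 → a • L ∈ T)
    (hpair : ∀ L ∈ T, ∀ L' ∈ T, L ⊆ L' ∨ L' ⊆ L) :
    ∀ x y : Fin n → E, x ≠ 0 → y ≠ 0 →
      (∀ L ∈ T, D.latticeNorm L y ≤ D.latticeNorm L x) ∨
      (∀ L ∈ T, D.latticeNorm L x ≤ D.latticeNorm L y) := by
  intro x y hx hy
  by_contra! h
  obtain ⟨⟨L, hL, hxy⟩, ⟨L', hL', hyx⟩⟩ := h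
  obtain ⟨a, ha, hxa, hya⟩ := (hTlat L hL).exists_smul_mem_notMem_smul hx hxy
  obtain ⟨b, hb, hyb, hxb⟩ := (hTlat L' hL').exists_smul_mem_notMem_smul hy hyx
  rcases hpair _ (hTscale L hL a ha) _ (hTscale L' hL' b hb) with h | h
  · exact hxb (h hxa)
  · exact hya (h hyb)

section Chain

variable {r : ℕ} {Λ : Fin (r + 1) → Set (Fin n → E)}

theorem smul_subset_of_chain (hchain : ∀ i : Fin r, Λ i.succ ⊂ Λ i.castSucc)
    (hmax : D.maxIdealSmul (Λ 0) ⊂ Λ (Fin.last r)) {c : E} (hc : D.v c < 1) (i j : Fin (r + 1)) :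
    c • Λ i ⊆ Λ j := by
  have hanti : Antitone Λ := Fin.antitone_iff_succ_le.2 fun k => (hchain k).subset
  calc c • Λ i ⊆ D.maxIdealSmul (Λ 0) := by
        rintro _ ⟨y, hy, rfl⟩
        exact ⟨c, hc, y, hanti (Fin.zero_le i) hy, rfl⟩
    _ ⊆ Λ (Fin.last r) := hmax.subset
    _ ⊆ Λ j := hanti (Fin.le_last j)

theorem smul_subset_or_subset_smul_of_chain (hlat : ∀ i, D.IsLattice (Λ i))
    (hchain : ∀ i : Fin r, Λ i.succ ⊂ Λ i.castSucc)
    (hmax : D.maxIdealSmul (Λ 0) ⊂ Λ (Fin.last r)) {c : E} (hc : c ≠ 0) (i j : Fin (r + 1)) :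
    c • Λ i ⊆ Λ j ∨ Λ j ⊆ c • Λ i := by
  rcases lt_trichotomy (D.v c) 1 with h | h | h
  · exact Or.inl (smul_subset_of_chain hchain hmax h i j)
  · have hanti : Antitone Λ := Fin.antitone_iff_succ_le.2 fun k => (hchain k).subset
    rw [(hlat i).smul_eq_self h]
    exact (le_total j i).imp (hanti ·) (hanti ·)
  · right
    rw [Set.subset_smul_set_iff₀ hc]
    exact smul_subset_of_chain hchain hmax (by rw [D.v_inv hc]; exact inv_lt_one_of_one_lt₀ h) j i

theorem pairwise_subset_of_chain (hlat : ∀ i, D.IsLattice (Λ i))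
    (hchain : ∀ i : Fin r, Λ i.succ ⊂ Λ i.castSucc)
    (hmax : D.maxIdealSmul (Λ 0) ⊂ Λ (Fin.last r)) :
    ∀ L ∈ {L' | ∃ a : E, a ≠ 0 ∧ ∃ i, L' = a • Λ i},
      ∀ L' ∈ {L' | ∃ a : E, a ≠ 0 ∧ ∃ i, L' = a • Λ i}, L ⊆ L' ∨ L' ⊆ L := by
  rintro _ ⟨a, ha, i, rfl⟩ _ ⟨b, hb, j, rfl⟩
  rw [show a • Λ i = b • (b⁻¹ * a) • Λ i by rw [smul_smul, mul_inv_cancel_left₀ hb],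
    Set.smul_set_subset_smul_set_iff₀ hb, Set.smul_set_subset_smul_set_iff₀ hb]
  exact smul_subset_or_subset_smul_of_chain hlat hchain hmax (mul_ne_zero (inv_ne_zero hb) ha) i j

end Chain

theorem exists_chain_of_pairwise_subset (hn : 1 ≤ n) {T : Set (Set (Fin n → E))}
    (hTlat : ∀ L ∈ T, D.IsLattice L) (hTne : T.Nonempty)
    (hTscale : ∀ L ∈ T, ∀ a : E, a ≠ 0 → a • L ∈ T)
    (hpair : ∀ L ∈ T, ∀ L' ∈ T, L ⊆ L' ∨ L' ⊆ L) :
    ∃ (r : ℕ) (Λ : Fin (r + 1) → Set (Fin n → E)),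
      (∀ i, D.IsLattice (Λ i)) ∧
      (∀ i : Fin r, Λ i.succ ⊂ Λ i.castSucc) ∧
      D.maxIdealSmul (Λ 0) ⊂ Λ (Fin.last r) ∧
      T = {L' | ∃ a : E, a ≠ 0 ∧ ∃ i, L' = a • Λ i} := by
  obtain ⟨π, hπ0, hπ⟩ := D.exists_v_eq_inv_q
  have hπ1 : D.v π < 1 := hπ ▸ inv_lt_one_of_one_lt₀ D.one_lt_q_real
  obtain ⟨L₀, hL₀T⟩ := hTne
  have hL₀ := hTlat L₀ hL₀T
  set F := {M | M ∈ T ∧ π • L₀ ⊂ M ∧ M ⊆ L₀}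
  have hFfin : F.Finite := (hL₀.finite_setOf_smul_subset_subset hπ0 hπ).subset
    fun M hM => ⟨hTlat M hM.1, hM.2.1.subset, hM.2.2⟩
  have hL₀F : L₀ ∈ F :=
    ⟨hL₀T, ⟨hL₀.smul_subset hπ1.le, hL₀.not_subset_smul hn hπ1⟩, subset_rfl⟩
  have hrep : ∀ L ∈ T, ∃ k : ℤ, π ^ k • L ∈ F := fun L hL => by
    obtain ⟨k, hk⟩ := (hTlat L hL).exists_zpow_smul_between hn hL₀ hπ0 hπ1 fun k =>
      hpair _ (hTscale L hL _ (zpow_ne_zero k hπ0)) _ (hTscale L₀ hL₀T π hπ0)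
    exact ⟨k, hTscale L hL _ (zpow_ne_zero k hπ0), hk⟩
  obtain ⟨r, Λ, hanti, hrange⟩ := exists_strictAnti_fin_of_isChain
    (fun M hM M' hM' _ => hpair M hM.1 M' hM'.1) hFfin ⟨L₀, hL₀F⟩
  have hΛF : ∀ i, Λ i ∈ F := fun i => hrange ▸ Set.mem_range_self i
  have hΛ0 : Λ 0 = L₀ := by
    obtain ⟨j, hj⟩ := hrange ▸ hL₀F
    exact (hΛF 0).2.2.antisymm (hj ▸ hanti.antitone (Fin.zero_le j))
  refine ⟨r, Λ, fun i => hTlat _ (hΛF i).1, Fin.strictAnti_iff_succ_lt.1 hanti, ?_, ?_⟩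
  · rw [D.maxIdealSmul_eq (hTlat _ (hΛF 0).1) hπ0 hπ, hΛ0]
    exact (hΛF _).2.1
  ext L
  refine ⟨fun hL => ?_, ?_⟩
  · obtain ⟨k, hk⟩ := hrep L hL
    obtain ⟨i, hi⟩ := hrange ▸ hk
    exact ⟨(π ^ k)⁻¹, inv_ne_zero (zpow_ne_zero k hπ0), i, by
      rw [hi, inv_smul_smul₀ (zpow_ne_zero k hπ0)]⟩
  · rintro ⟨a, ha, i, rfl⟩
    exact hTscale _ (hΛF i).1 a ha

end NonarchCDVF

open NonarchCDVF in
/-- Let `T` be a nonempty set of `O_E`-lattices in `E^n` stable under scaling.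
Then conditions (i), (ii), (iii) are equivalent. -/
theorem statement1 {E : Type*} [Field E] {q : ℕ} (D : NonarchCDVF E q) (n : ℕ) (hn : 1 ≤ n)
    (T : Set (Set (Fin n → E))) (hTlat : ∀ L ∈ T, D.IsLattice L) (hTne : T.Nonempty)
    (hTscale : ∀ L ∈ T, ∀ a : E, a ≠ 0 → a • L ∈ T) :
    ((∀ x y : Fin n → E, x ≠ 0 → y ≠ 0 →
        (∀ L ∈ T, D.latticeNorm L y ≤ D.latticeNorm L x) ∨
        (∀ L ∈ T, D.latticeNorm L x ≤ D.latticeNorm L y)) ↔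
      (∀ L ∈ T, ∀ L' ∈ T, L ⊆ L' ∨ L' ⊆ L)) ∧
    ((∀ L ∈ T, ∀ L' ∈ T, L ⊆ L' ∨ L' ⊆ L) ↔
      (∃ (r : ℕ) (L : Fin (r + 1) → Set (Fin n → E)),
        (∀ i, D.IsLattice (L i)) ∧
        (∀ i : Fin r, L i.succ ⊂ L i.castSucc) ∧
        D.maxIdealSmul (L 0) ⊂ L (Fin.last r) ∧
        T = {L' | ∃ a : E, a ≠ 0 ∧ ∃ i, L' = a • L i})) := by
  refine ⟨⟨pairwise_subset_of_latticeNorm_comparable hTlat,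
    latticeNorm_comparable_of_pairwise_subset hTlat hTscale⟩,
    ⟨exists_chain_of_pairwise_subset hn hTlat hTne hTscale, ?_⟩⟩
  rintro ⟨r, L, hlat, hchain, hmax, rfl⟩
  exact pairwise_subset_of_chain hlat hchain hmax
end
end

section
/- Let μ be a norm on F_∞^n and let λ_1, …, λ_n ∈ Λ. Then the following two conditions are equivalent: (i) (λ_1, …, λ_n) is an A-basis of Λ with μ(λ_i) ≤ μ(λ_{i+1}) for 1 ≤ i ≤ n−1, and μ(Σ_{i=1}^n x_i·λ_i) = max_{1≤i≤n} |x_i|·μ(λ_i) for all (x_1, …, x_n) ∈ F_∞^n; (ii) for each 1 ≤ i ≤ n, setting Λ_{i−1} = Σ_{j=1}^{i−1} A·λ_j, we have λ_i ∉ Λ_{i−1} and μ(λ_i) ≤ μ(λ) for every λ ∈ Λ ∖ Λ_{i−1}. -/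
/-!
Assume (ii). A vector `λ_i + x_1 λ_1 + ⋯ + x_{i-1} λ_{i-1}` with `x_j ∈ F_∞` lies at distance
`< μ(λ_i)` from the lattice vector `λ_i + a_1 λ_1 + ⋯ + a_{i-1} λ_{i-1}` obtained by rounding each
`x_j` to some `a_j ∈ A` (possible since `F_∞ = A + m_∞`), and that lattice vector lies outside
`Λ_{i-1}`. By the ultrametric inequality `λ_i` is therefore a shortest vector of its coset modulo
`F_∞ λ_1 + ⋯ + F_∞ λ_{i-1}`; adding the terms `x_i λ_i` in increasing order of `i` gives
orthogonality, hence `F_∞`-linear independence. Rounding the coordinates of a lattice vector in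
this basis leaves a lattice vector with all coordinates in `m_∞`, which must vanish, so the `λ_i`
span `Λ` over `A`. Conversely, (i) implies (ii) because `|a| ≥ 1` for every nonzero `a ∈ A`.
-/

noncomputable section

/-- The data of the field `F_∞ = F_q((1/T))`, the completion of `F_q(T)` at the place at
infinity, packaged axiomatically: a field `Finf` which is an `F_q[T]`-algebra, together with
its standard absolute value `v` (so `v a = q^{deg a}` for nonzero `a ∈ A = F_q[T]`), such
that every element is a polynomial plus an element of absolute value `< 1`, and which is
complete. -/
structure InftySetup (Fq : Type*) [Field Fq] [Fintype Fq]
    (Finf : Type*) [Field Finf] [Algebra (Polynomial Fq) Finf] : Type _ where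
  /-- the standard absolute value of `F_∞` -/
  v : Finf → ℝ
  v_zero : v 0 = 0
  v_pos : ∀ x : Finf, x ≠ 0 → 0 < v x
  v_mul : ∀ x y : Finf, v (x * y) = v x * v y
  v_add : ∀ x y : Finf, v (x + y) ≤ max (v x) (v y)
  /-- `|a| = q^{deg a}` for nonzero `a ∈ A` -/
  v_poly : ∀ a : Polynomial Fq, a ≠ 0 →
    v (algebraMap (Polynomial Fq) Finf a) = (Fintype.card Fq : ℝ) ^ a.natDegree
  /-- `F_∞ = A + m_∞` -/
  poly_dense : ∀ x : Finf, ∃ a : Polynomial Fq,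
    v (x - algebraMap (Polynomial Fq) Finf a) < 1
  /-- `F_∞` is complete -/
  complete : ∀ f : ℕ → Finf,
    (∀ ε : ℝ, 0 < ε → ∃ N : ℕ, ∀ m ≥ N, ∀ k ≥ N, v (f m - f k) < ε) →
    ∃ l : Finf, ∀ ε : ℝ, 0 < ε → ∃ N : ℕ, ∀ m ≥ N, v (f m - l) < ε

namespace InftySetup

variable {Fq : Type*} [Field Fq] [Fintype Fq]
variable {Finf : Type*} [Field Finf] [Algebra (Polynomial Fq) Finf]

/-- A norm on the `F_∞`-vector space `F_∞^n`. -/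
def IsNorm (D : InftySetup Fq Finf) {n : ℕ} (μ : (Fin n → Finf) → ℝ) : Prop :=
  (∀ (a : Finf) (x : Fin n → Finf), μ (a • x) = D.v a * μ x) ∧
  (∀ x y : Fin n → Finf, μ (x + y) ≤ max (μ x) (μ y)) ∧
  (∀ x : Fin n → Finf, x ≠ 0 → 0 < μ x)

end InftySetup

/-- The lattice `Λ = A^n ⊆ F_∞^n`. -/
def LambdaSet (Fq : Type*) [Field Fq] [Fintype Fq]
    (Finf : Type*) [Field Finf] [Algebra (Polynomial Fq) Finf] (n : ℕ) :
    Set (Fin n → Finf) :=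
  {x | ∀ i, ∃ a : Polynomial Fq, x i = algebraMap (Polynomial Fq) Finf a}

/-- `Λ_{i-1} = Σ_{j<i} A·λ_j`, the `A`-span of `λ_j` for `j < i`. -/
def partialSpan (Fq : Type*) [Field Fq] [Fintype Fq]
    {Finf : Type*} [Field Finf] [Algebra (Polynomial Fq) Finf] {n : ℕ}
    (lam : Fin n → (Fin n → Finf)) (i : Fin n) : Set (Fin n → Finf) :=
  {x | ∃ c : Fin n → Polynomial Fq, (∀ j, ¬ j < i → c j = 0) ∧
    x = ∑ j, algebraMap (Polynomial Fq) Finf (c j) • lam j}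

/-- Condition (i): `(λ_1, …, λ_n)` is an `A`-basis of `Λ` with `μ(λ_i) ≤ μ(λ_{i+1})` which is
orthonormal for `μ`. -/
def CondI {Fq : Type*} [Field Fq] [Fintype Fq]
    {Finf : Type*} [Field Finf] [Algebra (Polynomial Fq) Finf] {n : ℕ}
    (D : InftySetup Fq Finf) (μ : (Fin n → Finf) → ℝ)
    (lam : Fin n → (Fin n → Finf)) : Prop :=
  (∀ x ∈ LambdaSet Fq Finf n, ∃! c : Fin n → Polynomial Fq,
      x = ∑ j, algebraMap (Polynomial Fq) Finf (c j) • lam j) ∧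
  (Monotone fun i => μ (lam i)) ∧
  (∀ x : Fin n → Finf, μ (∑ i, x i • lam i) = ⨆ i, D.v (x i) * μ (lam i))

/-- Condition (ii): for each `i`, `λ_i ∉ Λ_{i-1}` and `λ_i` has the smallest norm among
`Λ ∖ Λ_{i-1}`. -/
def CondII (Fq : Type*) [Field Fq] [Fintype Fq]
    {Finf : Type*} [Field Finf] [Algebra (Polynomial Fq) Finf] {n : ℕ}
    (μ : (Fin n → Finf) → ℝ) (lam : Fin n → (Fin n → Finf)) : Prop :=
  ∀ i : Fin n, lam i ∉ partialSpan Fq lam i ∧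
    ∀ y ∈ LambdaSet Fq Finf n, y ∉ partialSpan Fq lam i → μ (lam i) ≤ μ y

namespace InftySetup

variable {Fq : Type*} [Field Fq] [Fintype Fq]
variable {Finf : Type*} [Field Finf] [Algebra (Polynomial Fq) Finf]

section AbsoluteValue

variable (D : InftySetup Fq Finf)

lemma v_nonneg (x : Finf) : 0 ≤ D.v x := by
  rcases eq_or_ne x 0 with rfl | hx
  · exact D.v_zero.ge
  · exact (D.v_pos x hx).le

lemma v_one : D.v 1 = 1 := by
  have h := D.v_mul 1 1
  rw [one_mul] at h
  have h1 := D.v_pos 1 one_ne_zero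
  nlinarith

lemma v_neg (x : Finf) : D.v (-x) = D.v x := by
  have h := D.v_mul (-1) (-1)
  rw [neg_mul_neg, one_mul, D.v_one] at h
  have h1 := D.v_pos (-1) (neg_ne_zero.mpr one_ne_zero)
  have hm : D.v (-1) = 1 := by nlinarith
  rw [← neg_one_mul, D.v_mul, hm, one_mul]

lemma v_algebraMap_ge_one {a : Polynomial Fq} (ha : a ≠ 0) :
    1 ≤ D.v (algebraMap (Polynomial Fq) Finf a) := by
  rw [D.v_poly a ha]
  exact one_le_pow₀ (by exact_mod_cast Fintype.card_pos)

include D in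
lemma algebraMap_injective : Function.Injective (algebraMap (Polynomial Fq) Finf) := by
  intro a b hab
  by_contra hne
  have h := D.v_algebraMap_ge_one (sub_ne_zero.mpr hne)
  rw [map_sub, hab, sub_self, D.v_zero] at h
  linarith

lemma exists_poly_approx {ι : Type*} (x : ι → Finf) :
    ∃ a : ι → Polynomial Fq, ∀ j,
      D.v (x j - algebraMap (Polynomial Fq) Finf (a j)) < 1 ∧ (x j = 0 → a j = 0) := by
  classical
  choose a ha using fun j => D.poly_dense (x j)
  refine ⟨fun j => if x j = 0 then 0 else a j, fun j => ?_⟩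
  by_cases hj : x j = 0 <;> simp [hj, D.v_zero, ha j]

end AbsoluteValue

namespace IsNorm

variable {D : InftySetup Fq Finf} {n : ℕ} {μ : (Fin n → Finf) → ℝ}

lemma map_zero (hμ : D.IsNorm μ) : μ 0 = 0 := by
  simpa [D.v_zero] using hμ.1 0 0

lemma nonneg (hμ : D.IsNorm μ) (x : Fin n → Finf) : 0 ≤ μ x := by
  rcases eq_or_ne x 0 with rfl | hx
  · exact hμ.map_zero.ge
  · exact (hμ.2.2 x hx).le

lemma map_neg (hμ : D.IsNorm μ) (x : Fin n → Finf) : μ (-x) = μ x := by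
  rw [← neg_one_smul Finf x, hμ.1, D.v_neg, D.v_one, one_mul]

lemma map_sub_le (hμ : D.IsNorm μ) (x y : Fin n → Finf) : μ (x - y) ≤ max (μ x) (μ y) := by
  simpa [sub_eq_add_neg, hμ.map_neg] using hμ.2.1 x (-y)

lemma le_of_map_sub_lt (hμ : D.IsNorm μ) {x y : Fin n → Finf} (h : μ (y - x) < μ x) :
    μ x ≤ μ y := by
  have hx := hμ.map_sub_le y (y - x)
  rw [sub_sub_cancel] at hx
  exact le_of_not_gt fun hy => (hx.trans_lt (max_lt hy h)).false

lemma le_map_add_of_le_map_add (hμ : D.IsNorm μ) {x y : Fin n → Finf}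
    (h : μ x ≤ μ (x + y)) : μ y ≤ μ (x + y) := by
  have hy := hμ.map_sub_le (x + y) x
  rw [add_sub_cancel_left] at hy
  exact hy.trans (max_le le_rfl h)

lemma sum_le (hμ : D.IsNorm μ) {ι : Type*} (s : Finset ι) (f : ι → Fin n → Finf) {B : ℝ}
    (hB : 0 ≤ B) (h : ∀ i ∈ s, μ (f i) ≤ B) : μ (∑ i ∈ s, f i) ≤ B := by
  classical
  induction s using Finset.induction_on with
  | empty => simpa [hμ.map_zero] using hB
  | insert a s ha ih =>
    rw [Finset.sum_insert ha]
    exact (hμ.2.1 _ _).trans (max_le (h a (Finset.mem_insert_self a s))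
      (ih fun i hi => h i (Finset.mem_insert_of_mem hi)))

lemma sum_lt (hμ : D.IsNorm μ) {ι : Type*} (s : Finset ι) (f : ι → Fin n → Finf) {B : ℝ}
    (hB : 0 < B) (h : ∀ i ∈ s, μ (f i) < B) : μ (∑ i ∈ s, f i) < B := by
  classical
  induction s using Finset.induction_on with
  | empty => simpa [hμ.map_zero] using hB
  | insert a s ha ih =>
    rw [Finset.sum_insert ha]
    exact (hμ.2.1 _ _).trans_lt (max_lt (h a (Finset.mem_insert_self a s))
      (ih fun i hi => h i (Finset.mem_insert_of_mem hi)))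

end IsNorm

end InftySetup

section Lattice

variable {Fq : Type*} [Field Fq] [Fintype Fq]
variable {Finf : Type*} [Field Finf] [Algebra (Polynomial Fq) Finf] {n : ℕ}
variable {lam : Fin n → (Fin n → Finf)}

lemma sum_algebraMap_smul_mem_lambdaSet (hlam : ∀ i, lam i ∈ LambdaSet Fq Finf n)
    (c : Fin n → Polynomial Fq) :
    ∑ j, algebraMap (Polynomial Fq) Finf (c j) • lam j ∈ LambdaSet Fq Finf n := by
  intro i
  choose b hb using fun j => hlam j i
  refine ⟨∑ j, c j * b j, ?_⟩
  simp only [Finset.sum_apply, Pi.smul_apply, smul_eq_mul, hb, map_sum, map_mul]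

lemma add_mem_lambdaSet {x y : Fin n → Finf} (hx : x ∈ LambdaSet Fq Finf n)
    (hy : y ∈ LambdaSet Fq Finf n) : x + y ∈ LambdaSet Fq Finf n := by
  intro i
  obtain ⟨a, ha⟩ := hx i
  obtain ⟨b, hb⟩ := hy i
  exact ⟨a + b, by rw [Pi.add_apply, ha, hb, map_add]⟩

lemma sub_mem_lambdaSet {x y : Fin n → Finf} (hx : x ∈ LambdaSet Fq Finf n)
    (hy : y ∈ LambdaSet Fq Finf n) : x - y ∈ LambdaSet Fq Finf n := by
  intro i
  obtain ⟨a, ha⟩ := hx i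
  obtain ⟨b, hb⟩ := hy i
  exact ⟨a - b, by rw [Pi.sub_apply, ha, hb, map_sub]⟩

lemma add_sum_not_mem_partialSpan {i : Fin n} (hi : lam i ∉ partialSpan Fq lam i)
    {a : Fin n → Polynomial Fq} (ha : ∀ j, ¬ j < i → a j = 0) :
    lam i + ∑ j, algebraMap (Polynomial Fq) Finf (a j) • lam j ∉ partialSpan Fq lam i := by
  rintro ⟨c, hc, heq⟩
  refine hi ⟨c - a, fun j hj => by simp [hc j hj, ha j hj], ?_⟩
  simp only [Pi.sub_apply, map_sub, sub_smul, Finset.sum_sub_distrib, ← heq,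
    add_sub_cancel_right]

lemma sum_smul_not_mem_partialSpan (hli : LinearIndependent Finf lam) {r : Fin n → Finf}
    {k : Fin n} (hk : r k ≠ 0) : ∑ j, r j • lam j ∉ partialSpan Fq lam k := by
  rintro ⟨c, hc, heq⟩
  apply hk
  rw [Fintype.linearIndependent_iffₛ.mp hli _ _ heq k, hc k (lt_irrefl k), map_zero]

end Lattice

namespace CondII

variable {Fq : Type*} [Field Fq] [Fintype Fq]
variable {Finf : Type*} [Field Finf] [Algebra (Polynomial Fq) Finf]
variable {D : InftySetup Fq Finf} {n : ℕ} {μ : (Fin n → Finf) → ℝ}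
variable {lam : Fin n → (Fin n → Finf)}

lemma ne_zero (h : CondII Fq μ lam) (i : Fin n) : lam i ≠ 0 :=
  fun h0 => (h i).1 ⟨0, fun _ _ => rfl, by simp [h0]⟩

lemma mu_pos (h : CondII Fq μ lam) (hμ : D.IsNorm μ) (i : Fin n) : 0 < μ (lam i) :=
  hμ.2.2 _ (h.ne_zero i)

lemma monotone (h : CondII Fq μ lam) (hlam : ∀ i, lam i ∈ LambdaSet Fq Finf n) :
    Monotone fun i => μ (lam i) := by
  intro i j hij
  refine (h i).2 (lam j) (hlam j) ?_
  rintro ⟨c, hc, heq⟩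
  exact (h j).1 ⟨c, fun k hk => hc k fun hki => hk (hki.trans_le hij), heq⟩

variable (hμ : D.IsNorm μ) (hlam : ∀ i, lam i ∈ LambdaSet Fq Finf n)
include hμ hlam

lemma mu_sum_lt_of_v_lt_one (h : CondII Fq μ lam) {r : Fin n → Finf} {k : Fin n}
    (hr : ∀ j, D.v (r j) < 1) (hk : ∀ j, k < j → r j = 0) :
    μ (∑ j, r j • lam j) < μ (lam k) := by
  refine hμ.sum_lt _ _ (h.mu_pos hμ k) fun j _ => ?_
  rw [hμ.1]
  rcases le_or_gt j k with hjk | hkj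
  · calc D.v (r j) * μ (lam j) ≤ D.v (r j) * μ (lam k) :=
          mul_le_mul_of_nonneg_left (h.monotone hlam hjk) (D.v_nonneg _)
      _ < μ (lam k) := mul_lt_of_lt_one_left (h.mu_pos hμ k) (hr j)
  · rw [hk j hkj, D.v_zero, zero_mul]
    exact h.mu_pos hμ k

lemma mu_le_mu_add (h : CondII Fq μ lam) {i : Fin n} {x : Fin n → Finf}
    (hx : ∀ j, ¬ j < i → x j = 0) : μ (lam i) ≤ μ (lam i + ∑ j, x j • lam j) := by
  obtain ⟨a, ha⟩ := D.exists_poly_approx x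
  have ha0 : ∀ j, ¬ j < i → a j = 0 := fun j hj => (ha j).2 (hx j hj)
  set lam' := lam i + ∑ j, algebraMap (Polynomial Fq) Finf (a j) • lam j
  have hmin : μ (lam i) ≤ μ lam' :=
    (h i).2 lam' (add_mem_lambdaSet (hlam i) (sum_algebraMap_smul_mem_lambdaSet hlam a))
      (add_sum_not_mem_partialSpan (h i).1 ha0)
  have hclose : μ ((lam i + ∑ j, x j • lam j) - lam') < μ (lam i) := by
    rw [show (lam i + ∑ j, x j • lam j) - lam'
        = ∑ j, (x j - algebraMap (Polynomial Fq) Finf (a j)) • lam j by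
      simp only [lam', add_sub_add_left_eq_sub, sub_smul, Finset.sum_sub_distrib]]
    refine h.mu_sum_lt_of_v_lt_one hμ hlam (fun j => (ha j).1) fun j hij => ?_
    rw [hx j (lt_asymm hij), ha0 j (lt_asymm hij), map_zero, sub_zero]
  exact hmin.trans (hμ.le_of_map_sub_lt (hclose.trans_le hmin))

lemma mu_smul_le_mu_add (h : CondII Fq μ lam) {i : Fin n} (c : Finf) {x : Fin n → Finf}
    (hx : ∀ j, ¬ j < i → x j = 0) : μ (c • lam i) ≤ μ (c • lam i + ∑ j, x j • lam j) := by
  rcases eq_or_ne c 0 with rfl | hc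
  · rw [zero_smul, hμ.map_zero]
    exact hμ.nonneg _
  have hscale : c • lam i + ∑ j, x j • lam j = c • (lam i + ∑ j, (c⁻¹ * x j) • lam j) := by
    simp only [smul_add, Finset.smul_sum, smul_smul, mul_inv_cancel_left₀ hc]
  rw [hscale, hμ.1, hμ.1]
  exact mul_le_mul_of_nonneg_left
    (h.mu_le_mu_add hμ hlam fun j hj => by rw [hx j hj, mul_zero]) (D.v_nonneg c)

lemma mu_smul_le_mu_sum (h : CondII Fq μ lam) (x : Fin n → Finf) (s : Finset (Fin n)) :
    ∀ j ∈ s, μ (x j • lam j) ≤ μ (∑ i ∈ s, x i • lam i) := by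
  classical
  refine Finset.induction_on_max s (by simp) fun a s hlt ih => ?_
  have hsum : ∑ i ∈ s, x i • lam i = ∑ i, (if i ∈ s then x i else 0) • lam i := by
    simp [ite_smul, Finset.sum_ite_mem]
  have hleading : μ (x a • lam a) ≤ μ (x a • lam a + ∑ i ∈ s, x i • lam i) := by
    rw [hsum]
    exact h.mu_smul_le_mu_add hμ hlam (x a) fun j hj => if_neg fun hjs => hj (hlt j hjs)
  rw [Finset.sum_insert fun has => (hlt a has).false]
  intro j hj
  rcases Finset.mem_insert.mp hj with rfl | hjs
  · exact hleading
  · exact (ih j hjs).trans (hμ.le_map_add_of_le_map_add hleading)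

lemma mu_sum_eq_iSup (h : CondII Fq μ lam) (x : Fin n → Finf) :
    μ (∑ i, x i • lam i) = ⨆ i, D.v (x i) * μ (lam i) := by
  refine le_antisymm ?_ ?_
  · refine hμ.sum_le _ _ (Real.iSup_nonneg fun i => mul_nonneg (D.v_nonneg _) (hμ.nonneg _))
      fun i _ => (hμ.1 _ _).trans_le
        (le_ciSup (f := fun i => D.v (x i) * μ (lam i)) (Set.finite_range _).bddAbove i)
  · refine Real.iSup_le (fun i => ?_) (hμ.nonneg _)
    rw [← hμ.1]
    exact h.mu_smul_le_mu_sum hμ hlam x _ i (Finset.mem_univ i)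

lemma linearIndependent (h : CondII Fq μ lam) : LinearIndependent Finf lam := by
  refine Fintype.linearIndependent_iff.mpr fun g hg i => ?_
  have hle : μ (g i • lam i) ≤ 0 := by
    simpa [hg, hμ.map_zero] using h.mu_smul_le_mu_sum hμ hlam g Finset.univ i (Finset.mem_univ i)
  by_contra hgi
  exact hle.not_gt (hμ.2.2 _ (smul_ne_zero hgi (h.ne_zero i)))

lemma eq_zero_of_v_lt_one (h : CondII Fq μ lam) {r : Fin n → Finf} (hr : ∀ j, D.v (r j) < 1)
    (hmem : ∑ j, r j • lam j ∈ LambdaSet Fq Finf n) : r = 0 := by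
  classical
  by_contra hne
  obtain ⟨j₀, hj₀⟩ := Function.ne_iff.mp hne
  obtain ⟨k, hk, hmax⟩ := Finset.exists_max_image (Finset.univ.filter fun j => r j ≠ 0) id
    ⟨j₀, by simpa using hj₀⟩
  simp only [Finset.mem_filter, Finset.mem_univ, true_and, id] at hk hmax
  have hlast : ∀ j, k < j → r j = 0 := fun j hkj => by_contra fun hj => (hmax j hj).not_gt hkj
  exact ((h k).2 _ hmem (sum_smul_not_mem_partialSpan (h.linearIndependent hμ hlam) hk)).not_gt
    (h.mu_sum_lt_of_v_lt_one hμ hlam hr hlast)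

lemma exists_eq_sum_algebraMap_smul (h : CondII Fq μ lam) {x : Fin n → Finf}
    (hx : x ∈ LambdaSet Fq Finf n) :
    ∃ c : Fin n → Polynomial Fq, x = ∑ j, algebraMap (Polynomial Fq) Finf (c j) • lam j := by
  have hspan := (h.linearIndependent hμ hlam).span_eq_top_of_card_eq_finrank' (by simp)
  obtain ⟨ξ, hξ⟩ := (Submodule.mem_span_range_iff_exists_fun Finf).mp (hspan ▸ Submodule.mem_top)
  choose a ha using fun j => D.poly_dense (ξ j)
  have hfrac : (fun j => ξ j - algebraMap (Polynomial Fq) Finf (a j)) = 0 := by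
    refine h.eq_zero_of_v_lt_one hμ hlam ha ?_
    simpa only [sub_smul, Finset.sum_sub_distrib, hξ] using
      sub_mem_lambdaSet hx (sum_algebraMap_smul_mem_lambdaSet hlam a)
  refine ⟨a, hξ.symm.trans (Finset.sum_congr rfl fun j _ => ?_)⟩
  rw [sub_eq_zero.mp (congrFun hfrac j)]

end CondII

section Equivalence

variable {Fq : Type*} [Field Fq] [Fintype Fq]
variable {Finf : Type*} [Field Finf] [Algebra (Polynomial Fq) Finf]
variable {D : InftySetup Fq Finf} {n : ℕ} {μ : (Fin n → Finf) → ℝ}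
variable {lam : Fin n → (Fin n → Finf)}

lemma condI_of_condII (hμ : D.IsNorm μ) (hlam : ∀ i, lam i ∈ LambdaSet Fq Finf n)
    (h : CondII Fq μ lam) : CondI D μ lam := by
  refine ⟨fun x hx => ?_, h.monotone hlam, h.mu_sum_eq_iSup hμ hlam⟩
  obtain ⟨c, hc⟩ := h.exists_eq_sum_algebraMap_smul hμ hlam hx
  refine ⟨c, hc, fun c' hc' => funext fun j => D.algebraMap_injective ?_⟩
  exact Fintype.linearIndependent_iffₛ.mp (h.linearIndependent hμ hlam) _ _ (hc'.symm.trans hc) j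

lemma condII_of_condI (hμ : D.IsNorm μ) (hlam : ∀ i, lam i ∈ LambdaSet Fq Finf n)
    (h : CondI D μ lam) : CondII Fq μ lam := by
  obtain ⟨hbasis, hmono, horth⟩ := h
  intro i
  refine ⟨?_, fun y hy hyi => ?_⟩
  · rintro ⟨c, hc, heq⟩
    have hsingle : lam i =
        ∑ j, algebraMap (Polynomial Fq) Finf ((Pi.single i 1 : Fin n → Polynomial Fq) j) • lam j := by
      simp [Pi.single_apply, ite_smul]
    simpa [hc i (lt_irrefl i)] using congrFun ((hbasis (lam i) (hlam i)).unique heq hsingle) i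
  · obtain ⟨c, hc, -⟩ := hbasis y hy
    obtain ⟨j, hij, hcj⟩ : ∃ j, ¬ j < i ∧ c j ≠ 0 := by
      by_contra! hc0
      exact hyi ⟨c, fun j hj => hc0 j (not_lt.mp hj), hc⟩
    calc μ (lam i) ≤ μ (lam j) := hmono (not_lt.mp hij)
      _ ≤ D.v (algebraMap (Polynomial Fq) Finf (c j)) * μ (lam j) :=
          le_mul_of_one_le_left (hμ.nonneg _) (D.v_algebraMap_ge_one hcj)
      _ ≤ ⨆ k, D.v (algebraMap (Polynomial Fq) Finf (c k)) * μ (lam k) :=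
          le_ciSup (f := fun k => D.v (algebraMap (Polynomial Fq) Finf (c k)) * μ (lam k))
            (Set.finite_range _).bddAbove j
      _ = μ y := by rw [hc, horth]

end Equivalence

theorem statement5_general {Fq : Type*} [Field Fq] [Fintype Fq]
    {Finf : Type*} [Field Finf] [Algebra (Polynomial Fq) Finf]
    (D : InftySetup Fq Finf) (n : ℕ)
    (μ : (Fin n → Finf) → ℝ) (hμ : D.IsNorm μ)
    (lam : Fin n → (Fin n → Finf)) (hlam : ∀ i, lam i ∈ LambdaSet Fq Finf n) :
    CondI D μ lam ↔ CondII Fq μ lam :=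
  ⟨condII_of_condI hμ hlam, condI_of_condII hμ hlam⟩

/-- Let `μ` be a norm on `F_∞^n` and `λ_1, …, λ_n ∈ Λ = A^n`.  Then
conditions (i) and (ii) are equivalent. -/
theorem statement5 {Fq : Type*} [Field Fq] [Fintype Fq]
    {Finf : Type*} [Field Finf] [Algebra (Polynomial Fq) Finf]
    (D : InftySetup Fq Finf) (n : ℕ) (hn : 1 ≤ n)
    (μ : (Fin n → Finf) → ℝ) (hμ : D.IsNorm μ)
    (lam : Fin n → (Fin n → Finf)) (hlam : ∀ i, lam i ∈ LambdaSet Fq Finf n) :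
    CondI D μ lam ↔ CondII Fq μ lam :=
  statement5_general D n μ hμ lam hlam
end
end

section
/- For all integers r ≥ 1, n ≥ 0 and every s ∈ ℝ_{>0}^n, the restriction of ε^{r,n}_s to ℝ_{≥0} is a continuous, strictly increasing bijection from ℝ_{≥0} onto ℝ_{≥0}. -/
noncomputable section

open scoped BigOperators

open Classical in
/-- The absolute value `|y| = q^{deg y}` (and `|0| = 0`) on `A = F_q[T]`. -/
def absA (Fq : Type) [Field Fq] [Fintype Fq] (y : Polynomial Fq) : ℝ :=
  if y = 0 then 0 else (Fintype.card Fq : ℝ) ^ y.natDegree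

/-- `ε^{r,n}_s(x) = x + Σ_{y ∈ A^n, y ≠ 0} max(x − max_{1≤i≤n} |y_i|^r·s_i, 0)`.
(For each `x` only finitely many summands are nonzero, so the `tsum` agrees with the
intended sum; the inner `⨆` over the finite type `Fin n` is the maximum.) -/
def epsFun (Fq : Type) [Field Fq] [Fintype Fq] (r n : ℕ) (s : Fin n → ℝ) (x : ℝ) : ℝ :=
  x + ∑' y : {y : Fin n → Polynomial Fq // y ≠ 0},
      max (x - ⨆ i : Fin n, (absA Fq (y.1 i)) ^ r * s i) 0

/-- `δ^{r,n}(s) = ((q−1)/(q^{r+n}−1))·Σ_{i=1}^n q^{n−i}·ε^{r,i−1}_{(s_1,…,s_{i−1})}(s_i)`. -/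
def deltaFun (Fq : Type) [Field Fq] [Fintype Fq] (r n : ℕ) (s : Fin n → ℝ) : ℝ :=
  ((Fintype.card Fq : ℝ) - 1) / ((Fintype.card Fq : ℝ) ^ (r + n) - 1) *
    ∑ i : Fin n, (Fintype.card Fq : ℝ) ^ (n - 1 - (i : ℕ)) *
      epsFun Fq r i (fun j : Fin (i : ℕ) => s (Fin.castLE i.isLt.le j)) (s i)

/-- `ε̂^{r,n}_s(x) = ε^{r,n}_s(x) − δ^{r,n}(s)`. -/
def epsHat (Fq : Type) [Field Fq] [Fintype Fq] (r n : ℕ) (s : Fin n → ℝ) (x : ℝ) : ℝ :=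
  epsFun Fq r n s x - deltaFun Fq r n s

/-!
Only the finitely many `y` with `c y < B` contribute to `ε^{r,n}_s` on `(-∞, B]`, because the
sublevel sets of `c y = max_i |y_i|^r s_i` are finite when `r ≥ 1` and all `s_i > 0`. Hence on each
such half-line `ε` is `x` plus a finite sum of nondecreasing continuous hinge functions: it is
continuous and strictly increasing. Since `c ≥ 0` it vanishes at `0` and satisfies `ε(x) ≥ x`,
so the intermediate value theorem gives surjectivity onto `[0, ∞)`.
-/

section HingeSum

variable {ι : Type*} (c : ι → ℝ)

def hingeSum (x : ℝ) : ℝ := x + ∑' i, max (x - c i) 0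

variable {c}

theorem self_le_hingeSum (x : ℝ) : x ≤ hingeSum c x :=
  le_add_of_nonneg_right (tsum_nonneg fun _ => le_max_right _ _)

theorem hingeSum_zero (hc : ∀ i, 0 ≤ c i) : hingeSum c 0 = 0 := by
  simp [hingeSum, hc]

variable (hc : ∀ B, {i | c i < B}.Finite)
include hc

theorem hingeSum_eq_sum_of_le {x B : ℝ} (hx : x ≤ B) :
    hingeSum c x = x + ∑ i ∈ (hc B).toFinset, max (x - c i) 0 := by
  rw [hingeSum, tsum_eq_sum]
  intro i hi
  have hBc : B ≤ c i := by simpa using hi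
  exact max_eq_right (by linarith)

theorem hingeSum_strictMono : StrictMono (hingeSum c) := by
  intro x z hxz
  rw [hingeSum_eq_sum_of_le hc hxz.le, hingeSum_eq_sum_of_le hc le_rfl]
  exact add_lt_add_of_lt_of_le hxz (Finset.sum_le_sum fun i _ => by gcongr)

theorem hingeSum_continuous : Continuous (hingeSum c) := by
  refine continuous_iff_continuousAt.2 fun x => ?_
  have hfin : Continuous fun t => t + ∑ i ∈ (hc (x + 1)).toFinset, max (t - c i) 0 := by
    fun_prop
  refine hfin.continuousAt.congr (Filter.eventuallyEq_of_mem (Iio_mem_nhds (lt_add_one x)) ?_)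
  exact fun t ht => (hingeSum_eq_sum_of_le hc (le_of_lt ht)).symm

theorem hingeSum_bijOn_Ici (hc₀ : ∀ i, 0 ≤ c i) :
    Set.BijOn (hingeSum c) (Set.Ici 0) (Set.Ici 0) := by
  refine ⟨fun x hx => le_trans hx (self_le_hingeSum x),
    ((hingeSum_strictMono hc).strictMonoOn _).injOn, fun w hw => ?_⟩
  have hmem : w ∈ Set.Icc (hingeSum c 0) (hingeSum c w) :=
    ⟨(hingeSum_zero hc₀).symm ▸ hw, self_le_hingeSum w⟩
  obtain ⟨x, hx, rfl⟩ := intermediate_value_Icc hw (hingeSum_continuous hc).continuousOn hmem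
  exact ⟨x, hx.1, rfl⟩

end HingeSum

section AbsA

variable (Fq : Type) [Field Fq] [Fintype Fq]

theorem absA_nonneg (p : Polynomial Fq) : 0 ≤ absA Fq p := by
  unfold absA
  split <;> positivity

theorem absA_le_absA_pow {r : ℕ} (hr : r ≠ 0) (p : Polynomial Fq) :
    absA Fq p ≤ absA Fq p ^ r := by
  by_cases hp : p = 0
  · simp [absA, hp, hr]
  · rw [absA, if_neg hp]
    exact le_self_pow₀ (one_le_pow₀ (by exact_mod_cast Fintype.card_pos)) hr

theorem finite_setOf_natDegree_le (D : ℕ) : {p : Polynomial Fq | p.natDegree ≤ D}.Finite := by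
  have : Finite (Polynomial.degreeLT Fq (D + 1)) :=
    .of_equiv _ (Polynomial.degreeLTEquiv Fq (D + 1)).toEquiv.symm
  refine (Set.toFinite (Polynomial.degreeLT Fq (D + 1) : Set (Polynomial Fq))).subset fun p hp => ?_
  exact Polynomial.mem_degreeLT.2 ((Polynomial.degree_le_natDegree).trans_lt
    (by exact_mod_cast Nat.lt_succ_of_le hp))

theorem finite_setOf_absA_lt (C : ℝ) : {p : Polynomial Fq | absA Fq p < C}.Finite := by
  refine (finite_setOf_natDegree_le Fq ⌊C⌋₊).subset fun p hp => ?_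
  by_cases h0 : p = 0
  · simp [h0]
  · replace hp : absA Fq p < C := hp
    rw [absA, if_neg h0] at hp
    have hdeg : (p.natDegree : ℝ) < (Fintype.card Fq : ℝ) ^ p.natDegree := by
      exact_mod_cast Nat.lt_pow_self Fintype.one_lt_card
    exact Nat.le_floor (hdeg.trans hp).le

theorem finite_setOf_iSup_absA_pow_mul_lt {n r : ℕ} (hr : r ≠ 0) {s : Fin n → ℝ}
    (hs : ∀ i, 0 < s i) (B : ℝ) :
    {y : Fin n → Polynomial Fq | ⨆ i, absA Fq (y i) ^ r * s i < B}.Finite := by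
  refine (Set.Finite.pi fun i => finite_setOf_absA_lt Fq (B / s i)).subset fun y hy => ?_
  refine Set.mem_univ_pi.2 fun i => ?_
  have hle : absA Fq (y i) ^ r * s i ≤ ⨆ i, absA Fq (y i) ^ r * s i :=
    le_ciSup (f := fun i => absA Fq (y i) ^ r * s i) (Set.finite_range _).bddAbove i
  exact (absA_le_absA_pow Fq hr (y i)).trans_lt ((lt_div_iff₀ (hs i)).2 (hle.trans_lt hy))

end AbsA

/-- For all integers `r ≥ 1`, `n ≥ 0` and every `s ∈ ℝ_{>0}^n`, the
restriction of `ε^{r,n}_s` to `ℝ_{≥0}` is a continuous, strictly increasing bijection from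
`ℝ_{≥0}` onto `ℝ_{≥0}`. -/
theorem statement7 (Fq : Type) [Field Fq] [Fintype Fq]
    (r n : ℕ) (hr : 1 ≤ r) (s : Fin n → ℝ) (hs : ∀ i, 0 < s i) :
    ContinuousOn (epsFun Fq r n s) (Set.Ici (0 : ℝ)) ∧
    StrictMonoOn (epsFun Fq r n s) (Set.Ici (0 : ℝ)) ∧
    Set.BijOn (epsFun Fq r n s) (Set.Ici (0 : ℝ)) (Set.Ici (0 : ℝ)) := by
  set c : {y : Fin n → Polynomial Fq // y ≠ 0} → ℝ := fun y => ⨆ i, absA Fq (y.1 i) ^ r * s i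
  have hε : epsFun Fq r n s = hingeSum c := rfl
  have hc : ∀ B, {y | c y < B}.Finite := fun B =>
    (finite_setOf_iSup_absA_pow_mul_lt Fq (by omega) hs B).preimage Subtype.val_injective.injOn
  have hc₀ : ∀ y, 0 ≤ c y := fun y =>
    Real.iSup_nonneg fun i => mul_nonneg (pow_nonneg (absA_nonneg Fq _) r) (hs i).le
  rw [hε]
  exact ⟨(hingeSum_continuous hc).continuousOn, (hingeSum_strictMono hc).strictMonoOn _,
    hingeSum_bijOn_Ici hc hc₀⟩
end
end
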